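/- Let g ≥ 3 be an integer, m = ⌊g/2⌋, and let δ₀, δ₁, …, δ_m be nonnegative real numbers, not all zero, such that δ₀ ≥ 1/(4g²) whenever δ₀ ≠ 0 and δ_i ≥ 1/((4i+2)(4(g−i)+2)) whenever δ_i ≠ 0, for 1 ≤ i ≤ m. If λ and κ are real numbers satisfying (8g+4)·λ ≥ g·δ₀ + Σ_{i=1}^{m} 4i(g−i)·δ_i and κ ≥ ((4g−4)/g)·λ, then κ ≥ (g−1)/(4g²(2g+1)). -/

import Mathlib

/-!
Every boundary divisor that occurs contributes at least `1 / (4g)` to the left-hand side of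
Moriwaki's inequality: `g · 1/(4g²)` for `δ₀`, and for `δᵢ` the quotient
`4i(g-i) / ((4i+2)(4(g-i)+2))`, which is at least `1/(4g)` once `g ≥ 3`. Hence
`λ ≥ 1/(4g(8g+4))`, and the slope inequality turns this into the bound on `κ`.
-/

open Finset

lemma one_div_four_mul_le_boundary_weight {i g : ℝ} (hi : 1 ≤ i) (hig : i + 1 ≤ g)
    (hg : 3 ≤ g) :
    1 / (4 * g) ≤ 4 * i * (g - i) * (1 / ((4 * i + 2) * (4 * (g - i) + 2))) := by
  have hgi : 1 ≤ g - i := by linarith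
  rw [mul_one_div, div_le_div_iff₀ (by linarith) (by positivity)]
  nlinarith [mul_nonneg (sub_nonneg.mpr hi) (sub_nonneg.mpr hgi)]

lemma one_div_four_mul_le_moriwaki_lhs (g : ℕ) (hg : 3 ≤ g) (δ : ℕ → ℝ)
    (hnn : ∀ i ≤ g / 2, 0 ≤ δ i)
    (h0 : δ 0 ≠ 0 → 1 / (4 * (g : ℝ) ^ 2) ≤ δ 0)
    (hi : ∀ i, 1 ≤ i → i ≤ g / 2 → δ i ≠ 0 →
      1 / ((4 * (i : ℝ) + 2) * (4 * ((g : ℝ) - (i : ℝ)) + 2)) ≤ δ i)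
    (hne : ∃ i ≤ g / 2, δ i ≠ 0) :
    1 / (4 * (g : ℝ)) ≤
      (g : ℝ) * δ 0 + ∑ i ∈ Icc 1 (g / 2), 4 * (i : ℝ) * ((g : ℝ) - (i : ℝ)) * δ i := by
  have hg3 : (3 : ℝ) ≤ g := by exact_mod_cast hg
  have hδ0 : 0 ≤ (g : ℝ) * δ 0 := mul_nonneg (Nat.cast_nonneg g) (hnn 0 (Nat.zero_le _))
  have hterm : ∀ i ∈ Icc 1 (g / 2), 0 ≤ 4 * (i : ℝ) * ((g : ℝ) - (i : ℝ)) * δ i := by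
    intro i hi'
    have hig : (i : ℝ) ≤ g := by exact_mod_cast (mem_Icc.mp hi').2.trans (Nat.div_le_self _ _)
    exact mul_nonneg (mul_nonneg (by positivity) (sub_nonneg.mpr hig)) (hnn i (mem_Icc.mp hi').2)
  obtain ⟨j, hj, hδj⟩ := hne
  rcases Nat.eq_zero_or_pos j with rfl | hj1
  · have hsum := sum_nonneg hterm
    have h := mul_le_mul_of_nonneg_left (h0 hδj) (Nat.cast_nonneg (α := ℝ) g)
    have heq : (g : ℝ) * (1 / (4 * (g : ℝ) ^ 2)) = 1 / (4 * g) := by field_simp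
    linarith
  · have hj1' : (1 : ℝ) ≤ j := by exact_mod_cast hj1
    have hjg : (j : ℝ) + 1 ≤ g := by exact_mod_cast (show j + 1 ≤ g by omega)
    have hweight := one_div_four_mul_le_boundary_weight hj1' hjg hg3
    have hδ := mul_le_mul_of_nonneg_left (hi j hj1 hj hδj)
      (show 0 ≤ 4 * (j : ℝ) * ((g : ℝ) - j) by nlinarith)
    have hsingle := single_le_sum hterm (mem_Icc.mpr ⟨hj1, hj⟩)
    linarith

lemma le_of_moriwaki_of_slope {g S lam κ : ℝ} (hg : 1 ≤ g) (hS : 1 / (4 * g) ≤ S)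
    (hmor : S ≤ (8 * g + 4) * lam) (hslope : ((4 * g - 4) / g) * lam ≤ κ) :
    (g - 1) / (4 * g ^ 2 * (2 * g + 1)) ≤ κ := by
  have hlam : 1 / (4 * g) / (8 * g + 4) ≤ lam := by
    rw [div_le_iff₀ (by linarith)]
    linarith
  have h := mul_le_mul_of_nonneg_left hlam (div_nonneg (by linarith : (0 : ℝ) ≤ 4 * g - 4)
    (by linarith : (0 : ℝ) ≤ g))
  have heq : (4 * g - 4) / g * (1 / (4 * g) / (8 * g + 4)) =
      (g - 1) / (4 * g ^ 2 * (2 * g + 1)) := by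
    field_simp
    ring
  linarith

theorem stmt_11 (g : ℕ) (hg : 3 ≤ g) (δ : ℕ → ℝ)
    (hnn : ∀ i ≤ g / 2, 0 ≤ δ i)
    (h0 : δ 0 ≠ 0 → 1 / (4 * (g : ℝ) ^ 2) ≤ δ 0)
    (hi : ∀ i, 1 ≤ i → i ≤ g / 2 → δ i ≠ 0 →
      1 / ((4 * (i : ℝ) + 2) * (4 * ((g : ℝ) - (i : ℝ)) + 2)) ≤ δ i)
    (hne : ∃ i ≤ g / 2, δ i ≠ 0)
    (lam κ : ℝ)
    (hmor : (g : ℝ) * δ 0 + ∑ i ∈ Finset.Icc 1 (g / 2), 4 * (i : ℝ) * ((g : ℝ) - (i : ℝ)) * δ i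
      ≤ (8 * (g : ℝ) + 4) * lam)
    (hslope : ((4 * (g : ℝ) - 4) / (g : ℝ)) * lam ≤ κ) :
    ((g : ℝ) - 1) / (4 * (g : ℝ) ^ 2 * (2 * (g : ℝ) + 1)) ≤ κ :=
  le_of_moriwaki_of_slope (by exact_mod_cast (by omega : 1 ≤ g))
    (one_div_four_mul_le_moriwaki_lhs g hg δ hnn h0 hi hne) hmor hslope
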